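/- (Dynamic IQC for repeated slope-restricted nonlinearity, finite-sum form.) Let f : ℝ → ℝ with f(0) = 0 slope-restricted to [0,1], F its componentwise extension to ℝ^m, and v : ℕ → ℝ^m with w(k) = F(v(k)). Let {Qᵢ}_{i=−N}^N ⊂ ℝ^{m×m} satisfy the sign and row/column-sum conditions making every finite block-Toeplitz matrix Q̄_{T₀} doubly hyperdominant. Then for every T₀ ≥ 0, with v̄, w̄ the stacked vectors: v̄ᵀ Q̄_{T₀}ᵀ w̄ + w̄ᵀ Q̄_{T₀} v̄ − w̄ᵀ(Q̄_{T₀} + Q̄_{T₀}ᵀ)w̄ ≥ 0. -/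

import Mathlib

/-!
Write `w̄ = f ∘ v̄`; the quadratic form is `2 w̄ᵀ Q̄ (v̄ - w̄)`, and `w̄`, `v̄ - w̄ = (id - f) ∘ v̄`
are monotone images of the same vector, so they are similarly ordered and have the same sign at
every index. For a doubly hyperdominant `M` and such `a, b` one has `aᵀ M b ≥ 0`. After splitting
into positive and negative parts, the mixed terms have disjoint supports and only meet the
nonpositive off-diagonal entries. For nonnegative similarly ordered `a, b` supported in `S`, the
index minimising both lets one write `a = a' + c 1_S`, `b = b' + d 1_S` with `a', b'` supported in a
smaller set; the new terms are controlled by `M 1_S ≥ 0` and `1_Sᵀ M ≥ 0` on `S`, which is where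
the row and column sum conditions enter. The block-Toeplitz matrix inherits these conditions
because every block row (column) sees a window of `Q₋N, …, Q_N` containing `Q₀`, and the blocks
it misses are nonpositive.
-/

open Matrix Finset

namespace Matrix

variable {ι : Type*} [Fintype ι]

structure IsDoublyHyperdominant (M : Matrix ι ι ℝ) : Prop where
  offDiag_nonpos : ∀ p q, p ≠ q → M p q ≤ 0
  sum_row_nonneg : ∀ p, 0 ≤ ∑ q, M p q
  sum_col_nonneg : ∀ q, 0 ≤ ∑ p, M p q

theorem IsDoublyHyperdominant.transpose {M : Matrix ι ι ℝ} (hM : M.IsDoublyHyperdominant) :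
    Mᵀ.IsDoublyHyperdominant where
  offDiag_nonpos p q hpq := hM.offDiag_nonpos q p hpq.symm
  sum_row_nonneg := hM.sum_col_nonneg
  sum_col_nonneg := hM.sum_row_nonneg

theorem sum_mem_nonneg_of_offDiag_nonpos [DecidableEq ι] {M : Matrix ι ι ℝ} {p : ι}
    {s : Finset ι} (hoff : ∀ q, p ≠ q → M p q ≤ 0) (hrow : 0 ≤ ∑ q, M p q) (hp : p ∈ s) :
    0 ≤ ∑ q ∈ s, M p q := by
  have hout : ∑ q ∈ sᶜ, M p q ≤ 0 :=
    sum_nonpos fun q hq => hoff q fun h => mem_compl.mp hq (h ▸ hp)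
  linarith [sum_compl_add_sum s (M p)]

theorem dotProduct_mulVec_indicator_nonneg [DecidableEq ι] {M : Matrix ι ι ℝ} {s : Finset ι}
    {u : ι → ℝ} (hoff : ∀ p q, p ≠ q → M p q ≤ 0) (hrow : ∀ p, 0 ≤ ∑ q, M p q)
    (hu : 0 ≤ u) (hus : ∀ p ∉ s, u p = 0) :
    0 ≤ u ⬝ᵥ (M *ᵥ (s : Set ι).indicator 1) := by
  refine sum_nonneg fun p _ => ?_
  by_cases hp : p ∈ s
  · have hMs : (M *ᵥ (s : Set ι).indicator 1) p = ∑ q ∈ s, M p q := by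
      simp [mulVec, dotProduct, Set.indicator_apply]
    rw [hMs]
    exact mul_nonneg (hu p) (sum_mem_nonneg_of_offDiag_nonpos (hoff p) (hrow p) hp)
  · simp [hus p hp]

theorem dotProduct_mulVec_nonpos_of_mul_eq_zero {M : Matrix ι ι ℝ}
    (hoff : ∀ p q, p ≠ q → M p q ≤ 0) {u v : ι → ℝ} (hu : 0 ≤ u) (hv : 0 ≤ v)
    (huv : ∀ p, u p * v p = 0) : u ⬝ᵥ (M *ᵥ v) ≤ 0 := by
  simp only [dotProduct, mulVec, mul_sum]
  refine sum_nonpos fun p _ => sum_nonpos fun q _ => ?_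
  rcases eq_or_ne p q with rfl | hpq
  · rw [mul_left_comm, huv, mul_zero]
  · have := hoff p q hpq
    have := mul_nonneg (hu p) (hv q)
    nlinarith

end Matrix

section Monovary

variable {ι : Type*} {u v : ι → ℝ}

theorem Monovary.comp_monotone (huv : Monovary u v) {φ ψ : ℝ → ℝ} (hφ : Monotone φ)
    (hψ : Monotone ψ) : Monovary (φ ∘ u) (ψ ∘ v) :=
  ((huv.comp_monotone_left hφ).symm.comp_monotone_left hψ).symm

theorem Monovary.comp_antitone (huv : Monovary u v) {φ ψ : ℝ → ℝ} (hφ : Antitone φ)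
    (hψ : Antitone ψ) : Monovary (φ ∘ u) (ψ ∘ v) :=
  ((huv.comp_antitone_left hφ).symm.comp_antitone_left hψ).symm

theorem Monovary.exists_mem_forall_le_and_le (huv : Monovary u v) {s : Finset ι}
    (hs : s.Nonempty) : ∃ p₀ ∈ s, ∀ q ∈ s, u p₀ ≤ u q ∧ v p₀ ≤ v q := by
  obtain ⟨p₀, hp₀, hmin⟩ := s.exists_min_image (fun p => u p + v p) hs
  refine ⟨p₀, hp₀, fun q hq => ?_⟩
  have hprod := monovary_iff_forall_mul_nonneg.mp huv p₀ q
  have hsum := hmin q hq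
  constructor <;> nlinarith

end Monovary

theorem eq_posPart_sub_add_smul_indicator {ι : Type*} {s : Finset ι} {w : ι → ℝ} {e : ℝ}
    (he : 0 ≤ e) (hle : ∀ q ∈ s, e ≤ w q) (hws : ∀ p ∉ s, w p = 0) :
    w = (fun p => (w p - e)⁺) + e • (s : Set ι).indicator 1 := by
  funext p
  by_cases hp : p ∈ s
  · simp [hp, posPart_of_nonneg (sub_nonneg.mpr (hle p hp))]
  · simp [hp, hws p hp, he]

namespace Matrix.IsDoublyHyperdominant

variable {ι : Type*} [Fintype ι] [DecidableEq ι] {M : Matrix ι ι ℝ}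

theorem dotProduct_mulVec_add_smul_indicator_nonneg (hM : M.IsDoublyHyperdominant)
    {s : Finset ι} {u v : ι → ℝ} {c d : ℝ} (hc : 0 ≤ c) (hd : 0 ≤ d) (hu : 0 ≤ u) (hv : 0 ≤ v)
    (hus : ∀ p ∉ s, u p = 0) (hvs : ∀ p ∉ s, v p = 0) (huv : 0 ≤ u ⬝ᵥ (M *ᵥ v)) :
    0 ≤ (u + c • (s : Set ι).indicator 1) ⬝ᵥ (M *ᵥ (v + d • (s : Set ι).indicator 1)) := by
  have hrow := dotProduct_mulVec_indicator_nonneg hM.offDiag_nonpos hM.sum_row_nonneg hu hus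
  have hcol : 0 ≤ (s : Set ι).indicator 1 ⬝ᵥ (M *ᵥ v) := by
    have := dotProduct_mulVec_indicator_nonneg hM.transpose.offDiag_nonpos
      hM.transpose.sum_row_nonneg hv hvs
    rwa [mulVec_transpose, dotProduct_comm, ← dotProduct_mulVec] at this
  have hdiag := dotProduct_mulVec_indicator_nonneg (s := s) (u := (s : Set ι).indicator 1)
    hM.offDiag_nonpos hM.sum_row_nonneg (Set.indicator_nonneg fun _ _ => zero_le_one)
    fun p hp => by simp [hp]
  simp only [add_dotProduct, mulVec_add, dotProduct_add, mulVec_smul, dotProduct_smul,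
    smul_dotProduct, smul_eq_mul]
  have := mul_nonneg hd hrow
  have := mul_nonneg hc hcol
  have := mul_nonneg hc (mul_nonneg hd hdiag)
  linarith

theorem dotProduct_mulVec_nonneg_of_support_subset (hM : M.IsDoublyHyperdominant)
    (s : Finset ι) {u v : ι → ℝ} (hu : 0 ≤ u) (hv : 0 ≤ v) (huv : Monovary u v)
    (hus : ∀ p ∉ s, u p = 0) (hvs : ∀ p ∉ s, v p = 0) : 0 ≤ u ⬝ᵥ (M *ᵥ v) := by
  induction s using Finset.strongInduction generalizing u v with
  | H s ih =>
  rcases s.eq_empty_or_nonempty with rfl | hne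
  · simp [show u = 0 from funext fun p => hus p (notMem_empty p)]
  obtain ⟨p₀, hp₀, hle⟩ := huv.exists_mem_forall_le_and_le hne
  set c := u p₀
  set d := v p₀
  have hc : 0 ≤ c := hu p₀
  have hd : 0 ≤ d := hv p₀
  set u' : ι → ℝ := fun p => (u p - c)⁺
  set v' : ι → ℝ := fun p => (v p - d)⁺
  have hu' : 0 ≤ u' := fun p => posPart_nonneg _
  have hv' : 0 ≤ v' := fun p => posPart_nonneg _
  have hu's : ∀ p ∉ s, u' p = 0 := fun p hp => by simp [u', hus p hp, hc]
  have hv's : ∀ p ∉ s, v' p = 0 := fun p hp => by simp [v', hvs p hp, hd]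
  have hrec : 0 ≤ u' ⬝ᵥ (M *ᵥ v') := by
    have hshift : ∀ e : ℝ, Monotone fun t : ℝ => (t - e)⁺ :=
      fun e _ _ h => posPart_mono (sub_le_sub_right h e)
    have hsupp : ∀ p ∉ s.erase p₀, p = p₀ ∨ p ∉ s := fun p hp => by
      rwa [mem_erase, not_and_or, not_not] at hp
    refine ih (s.erase p₀) (erase_ssubset hp₀) hu' hv' (huv.comp_monotone (hshift c) (hshift d))
      (fun p hp => ?_) (fun p hp => ?_) <;> rcases hsupp p hp with rfl | hp
    · simp [u', c]
    · exact hu's p hp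
    · simp [v', d]
    · exact hv's p hp
  rw [eq_posPart_sub_add_smul_indicator hc (fun q hq => (hle q hq).1) hus,
    eq_posPart_sub_add_smul_indicator hd (fun q hq => (hle q hq).2) hvs]
  exact hM.dotProduct_mulVec_add_smul_indicator_nonneg hc hd hu' hv' hu's hv's hrec

theorem dotProduct_mulVec_nonneg (hM : M.IsDoublyHyperdominant) {a b : ι → ℝ}
    (hab : Monovary a b) (hsign : ∀ p, 0 ≤ a p * b p) : 0 ≤ a ⬝ᵥ (M *ᵥ b) := by
  have hcross : ∀ x y : ℝ, 0 ≤ x * y → x⁺ * y⁻ = 0 := by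
    intro x y hxy
    rcases le_or_gt x 0 with hx | hx
    · simp [posPart_of_nonpos hx]
    · simp [negPart_of_nonneg (nonneg_of_mul_nonneg_right hxy hx)]
  have h₁ := hM.dotProduct_mulVec_nonneg_of_support_subset univ
    (fun p => posPart_nonneg _) (fun p => posPart_nonneg _)
    (hab.comp_monotone posPart_mono posPart_mono) (by simp) (by simp)
  have h₂ := hM.dotProduct_mulVec_nonneg_of_support_subset univ
    (fun p => negPart_nonneg _) (fun p => negPart_nonneg _)
    (hab.comp_antitone negPart_anti negPart_anti) (by simp) (by simp)
  have h₃ := dotProduct_mulVec_nonpos_of_mul_eq_zero hM.offDiag_nonpos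
    (fun p => posPart_nonneg (a p)) (fun p => negPart_nonneg (b p))
    fun p => hcross _ _ (hsign p)
  have h₄ := dotProduct_mulVec_nonpos_of_mul_eq_zero hM.offDiag_nonpos
    (fun p => negPart_nonneg (a p)) (fun p => posPart_nonneg (b p))
    fun p => by rw [mul_comm]; exact hcross _ _ (by rw [mul_comm]; exact hsign p)
  have hsplit : ∀ x : ι → ℝ, x = (fun p => (x p)⁺) - fun p => (x p)⁻ :=
    fun x => funext fun p => (posPart_sub_negPart (x p)).symm
  rw [hsplit a, hsplit b]
  simp only [sub_dotProduct, mulVec_sub, dotProduct_sub]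
  linarith

end Matrix.IsDoublyHyperdominant

section BlockToeplitz

variable {κ : Type*} {N T : ℕ} {Q : ℤ → Matrix κ κ ℝ}

def blockToeplitz (N T : ℕ) (Q : ℤ → Matrix κ κ ℝ) : Matrix (Fin T × κ) (Fin T × κ) ℝ :=
  fun p q => if ((q.1.val : ℤ) - p.1.val).natAbs ≤ N then Q ((q.1.val : ℤ) - p.1.val) p.2 q.2
    else 0

theorem blockToeplitz_transpose :
    (blockToeplitz N T Q)ᵀ = blockToeplitz N T fun i => (Q (-i))ᵀ := by
  ext p q
  simp only [transpose_apply, blockToeplitz, neg_sub]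
  rw [← Int.natAbs_neg, neg_sub]

theorem blockToeplitz_sum_row_nonneg [Fintype κ]
    (hoff : ∀ i : ℤ, i ≠ 0 → i.natAbs ≤ N → ∀ a b, Q i a b ≤ 0)
    (hrow : ∀ a, 0 ≤ ∑ i ∈ Icc (-(N : ℤ)) N, ∑ b, Q i a b) (p : Fin T × κ) :
    0 ≤ ∑ q, blockToeplitz N T Q p q := by
  set r : ℤ → ℝ := fun i => ∑ b, Q i p.2 b
  set window := univ.filter fun j : Fin T => ((j.val : ℤ) - p.1.val).natAbs ≤ N
  set D := window.image fun j : Fin T => (j.val : ℤ) - p.1.val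
  have hD : D ⊆ Icc (-(N : ℤ)) N := by
    intro i hi
    obtain ⟨j, hj, rfl⟩ := mem_image.mp hi
    have := (mem_filter.mp hj).2
    rw [mem_Icc]; omega
  have h0 : (0 : ℤ) ∈ D := mem_image.mpr ⟨p.1, by simp [window], sub_self _⟩
  have hmissing : ∑ i ∈ Icc (-(N : ℤ)) N \ D, r i ≤ 0 := by
    refine sum_nonpos fun i hi => sum_nonpos fun b _ => ?_
    obtain ⟨hiN, hiD⟩ := mem_sdiff.mp hi
    exact hoff i (fun h => hiD (h ▸ h0)) (by rw [mem_Icc] at hiN; omega) _ _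
  calc 0 ≤ ∑ i ∈ Icc (-(N : ℤ)) N, r i := hrow p.2
    _ ≤ ∑ i ∈ D, r i := by rw [← sum_sdiff hD]; linarith
    _ = ∑ q, blockToeplitz N T Q p q := by
      rw [sum_image fun x _ y _ h => Fin.ext (by simpa using h), sum_filter,
        Fintype.sum_prod_type]
      refine sum_congr rfl fun j _ => ?_
      split_ifs with h <;> simp [blockToeplitz, h, r]

theorem isDoublyHyperdominant_blockToeplitz [Fintype κ]
    (hoff : ∀ i : ℤ, i ≠ 0 → i.natAbs ≤ N → ∀ a b, Q i a b ≤ 0)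
    (hdiag : ∀ a b, a ≠ b → Q 0 a b ≤ 0)
    (hrow : ∀ a, 0 ≤ ∑ i ∈ Icc (-(N : ℤ)) N, ∑ b, Q i a b)
    (hcol : ∀ b, 0 ≤ ∑ i ∈ Icc (-(N : ℤ)) N, ∑ a, Q i a b) :
    (blockToeplitz N T Q).IsDoublyHyperdominant where
  offDiag_nonpos p q hpq := by
    unfold blockToeplitz
    split_ifs with hN
    · rcases eq_or_ne p.1 q.1 with h | h
      · rw [h, sub_self]
        exact hdiag _ _ fun h' => hpq (Prod.ext h h')
      · exact hoff _ (fun h' => h (Fin.ext (by omega))) hN _ _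
    · exact le_rfl
  sum_row_nonneg := blockToeplitz_sum_row_nonneg hoff hrow
  sum_col_nonneg q := by
    have hrow' : ∀ a, 0 ≤ ∑ i ∈ Icc (-(N : ℤ)) N, ∑ b, (Q (-i))ᵀ a b := by
      intro a
      rw [← sum_equiv (Equiv.neg ℤ) (s := Icc (-(N : ℤ)) N) (t := Icc (-(N : ℤ)) N)
        (by intro i; simp [mem_Icc]; omega) (fun i _ => rfl)]
      simpa using hcol a
    have := blockToeplitz_sum_row_nonneg (T := T) (Q := fun i => (Q (-i))ᵀ)
      (fun i hi hiN a b => hoff (-i) (neg_ne_zero.mpr hi) (by simpa using hiN) b a) hrow' q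
    rwa [← blockToeplitz_transpose] at this

end BlockToeplitz

theorem monotone_of_slope_nonneg {f : ℝ → ℝ}
    (h : ∀ a b : ℝ, a ≠ b → 0 ≤ (f b - f a) / (b - a)) : Monotone f :=
  monotone_iff_forall_lt.mpr fun a b hab => by
    have := h a b hab.ne
    rw [div_nonneg_iff] at this
    rcases this with ⟨h₁, -⟩ | ⟨-, h₂⟩ <;> linarith

theorem monotone_sub_of_slope_le_one {f : ℝ → ℝ}
    (h : ∀ a b : ℝ, a ≠ b → (f b - f a) / (b - a) ≤ 1) : Monotone fun t => t - f t :=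
  monotone_iff_forall_lt.mpr fun a b hab => by
    have := h a b hab.ne
    rw [div_le_one (sub_pos.mpr hab)] at this
    linarith

theorem Monotone.mul_map_nonneg {f g : ℝ → ℝ} (hf : Monotone f) (hg : Monotone g)
    (hf0 : f 0 = 0) (hg0 : g 0 = 0) (x : ℝ) : 0 ≤ f x * g x := by
  rcases le_total 0 x with hx | hx
  · exact mul_nonneg (hf0 ▸ hf hx) (hg0 ▸ hg hx)
  · exact mul_nonneg_of_nonpos_of_nonpos (hf0 ▸ hf hx) (hg0 ▸ hg hx)

/-- Dynamic IQC for a repeated slope-restricted nonlinearity, finite-sum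
(stacked) form (Lemma 3). -/
theorem slope_restricted_dynamic_IQC (m N : ℕ)
    (f : ℝ → ℝ) (hf0 : f 0 = 0)
    (hslope : ∀ a b : ℝ, a ≠ b →
      0 ≤ (f b - f a) / (b - a) ∧ (f b - f a) / (b - a) ≤ 1)
    (v w : ℕ → Fin m → ℝ)
    (hw : ∀ k i, w k i = f (v k i))
    (Q : ℤ → Matrix (Fin m) (Fin m) ℝ)
    (h1 : ∀ i : ℤ, i ≠ 0 → i.natAbs ≤ N → ∀ a b, Q i a b ≤ 0)
    (h2 : ∀ a b : Fin m, a ≠ b → Q 0 a b ≤ 0)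
    (h3 : ∀ a : Fin m, 0 ≤ ∑ i ∈ Finset.Icc (-(N : ℤ)) N, ∑ b, Q i a b)
    (h4 : ∀ b : Fin m, 0 ≤ ∑ i ∈ Finset.Icc (-(N : ℤ)) N, ∑ a, Q i a b)
    (T₀ : ℕ)
    (Qbar : Matrix (Fin (T₀ + 1) × Fin m) (Fin (T₀ + 1) × Fin m) ℝ)
    (hQbar : ∀ p q, Qbar p q =
      if ((q.1.val : ℤ) - (p.1.val : ℤ)).natAbs ≤ N then
        Q ((q.1.val : ℤ) - (p.1.val : ℤ)) p.2 q.2 else 0)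
    (vbar wbar : Fin (T₀ + 1) × Fin m → ℝ)
    (hvbar : ∀ p, vbar p = v (T₀ - p.1.val) p.2)
    (hwbar : ∀ p, wbar p = w (T₀ - p.1.val) p.2) :
    0 ≤ vbar ⬝ᵥ (Qbarᵀ *ᵥ wbar) + wbar ⬝ᵥ (Qbar *ᵥ vbar)
        - wbar ⬝ᵥ ((Qbar + Qbarᵀ) *ᵥ wbar) := by
  have hQ : Qbar = blockToeplitz N (T₀ + 1) Q := by ext p q; exact hQbar p q
  have hf : Monotone f := monotone_of_slope_nonneg fun a b hab => (hslope a b hab).1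
  have hg : Monotone fun t => t - f t :=
    monotone_sub_of_slope_le_one fun a b hab => (hslope a b hab).2
  have hwv : wbar = f ∘ vbar := funext fun p => by simp [hwbar, hw, hvbar]
  have hvw : vbar - wbar = (fun t => t - f t) ∘ vbar := by rw [hwv]; rfl
  have key : 0 ≤ wbar ⬝ᵥ (Qbar *ᵥ (vbar - wbar)) := by
    rw [hQ]
    refine (isDoublyHyperdominant_blockToeplitz h1 h2 h3 h4).dotProduct_mulVec_nonneg ?_ ?_
    · rw [hvw, hwv]; exact (hf.monovary hg).comp_right vbar
    · intro p; rw [hvw, hwv]; exact hf.mul_map_nonneg hg hf0 (by simp [hf0]) (vbar p)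
  rw [dotProduct_transpose_mulVec, add_mulVec, dotProduct_add, dotProduct_transpose_mulVec]
  rw [mulVec_sub, dotProduct_sub] at key
  linarith
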